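/- arXiv:0911.5263 — 2 statements merged into one kernel-verified Lean document; each statement's English description precedes it below -/
import Mathlib

section
/- Let A and B be proximinal parallel subsets of a Banach space X, with B = A + h where ‖h‖ = dist(A,B), and let T be a cyclic contraction map defined on A∪B. Then T(a+h) = Ta − h for every a ∈ A, and T(b−h) = Tb + h for every b ∈ B. -/
open Filter Metric

/-- The distance between two sets: `inf {d(x,y) : x ∈ A, y ∈ B}`. -/
noncomputable def setDist {X : Type*} [PseudoMetricSpace X] (A B : Set X) : ℝ :=
  sInf (Set.image2 dist A B)

/-- `(A,B)` is a sharp proximinal pair: for each `(x,y) ∈ A × B` there is a unique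
pair `(x',y') ∈ A × B` with `‖x - y'‖ = ‖x' - y‖ = dist(A,B)`. -/
def SharpProximinalPair {X : Type*} [NormedAddCommGroup X] (A B : Set X) : Prop :=
  ∀ x ∈ A, ∀ y ∈ B, ∃! p : X × X,
    p.1 ∈ A ∧ p.2 ∈ B ∧ dist x p.2 = setDist A B ∧ dist p.1 y = setDist A B

/-- `A` and `B` are proximinal parallel sets, with `B = A + h` and
`‖h‖ = dist(A,B)`. -/
def ProximinalParallel {X : Type*} [NormedAddCommGroup X] (A B : Set X) (h : X) : Prop :=
  SharpProximinalPair A B ∧ B = (fun a => a + h) '' A ∧ ‖h‖ = setDist A B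

/-- `T` is a cyclic contraction on `A ∪ B`. -/
def CyclicContraction {X : Type*} [PseudoMetricSpace X] (A B : Set X) (T : X → X) : Prop :=
  Set.MapsTo T A B ∧ Set.MapsTo T B A ∧ ∃ k : ℝ, 0 < k ∧ k < 1 ∧
    ∀ x ∈ A, ∀ y ∈ B, dist (T x) (T y) ≤ k * dist x y + (1 - k) * setDist A B

lemma setDist_le' {X : Type*} [PseudoMetricSpace X] {A B : Set X} {x y : X}
    (hx : x ∈ A) (hy : y ∈ B) : setDist A B ≤ dist x y := by
  apply csInf_le
  · exact ⟨0, by rintro z ⟨u, hu, v, hv, rfl⟩; exact dist_nonneg⟩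
  · exact Set.mem_image2_of_mem hx hy

theorem cyclic_contraction_translation {X : Type*} [NormedAddCommGroup X]
    [NormedSpace ℝ X] [CompleteSpace X]
    (A B : Set X) (hA : A.Nonempty) (hB : B.Nonempty) (h : X)
    (hpar : ProximinalParallel A B h)
    (T : X → X) (hT : CyclicContraction A B T) :
    (∀ a ∈ A, T (a + h) = T a - h) ∧ (∀ b ∈ B, T (b - h) = T b + h) := by
  obtain ⟨hsharp, hBA, hnorm⟩ := hpar
  obtain ⟨hTAB, hTBA, k, hk0, hk1, hc⟩ := hT
  set d := setDist A B with hd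
  have hmemB : ∀ a ∈ A, a + h ∈ B := fun a ha => hBA ▸ ⟨a, ha, rfl⟩
  have hmemA : ∀ b ∈ B, b - h ∈ A := by
    intro b hb
    rw [hBA] at hb
    obtain ⟨a, ha, rfl⟩ := hb
    simpa using ha
  constructor
  · intro a ha
    have hahB : a + h ∈ B := hmemB a ha
    have hTa : T a ∈ B := hTAB ha
    have hTah : T (a + h) ∈ A := hTBA hahB
    have hdist : dist (T (a + h)) (T a) = d := by
      have h1 : dist (T a) (T (a + h)) ≤ k * dist a (a + h) + (1 - k) * d :=
        hc a ha (a + h) hahB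
      have h2 : dist a (a + h) = d := by
        rw [dist_eq_norm]; simpa using hnorm
      have h3 : d ≤ dist (T (a + h)) (T a) := setDist_le' hTah hTa
      rw [h2] at h1
      rw [dist_comm] at h1
      nlinarith
    obtain ⟨p, -, hpuniq⟩ := hsharp (T (a + h)) hTah (T a) hTa
    have e1 : (T (a + h), T a) = p := by
      apply hpuniq
      exact ⟨hTah, hTa, hdist, hdist⟩
    have e2 : (T a - h, T (a + h) + h) = p := by
      apply hpuniq
      refine ⟨?_, hmemB _ hTah, ?_, ?_⟩
      · simpa using hmemA _ hTa
      · rw [dist_eq_norm]; simpa using hnorm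
      · rw [dist_eq_norm]; simpa using hnorm
    have := e1.trans e2.symm
    exact (Prod.mk.injEq _ _ _ _ ▸ this).1
  · intro b hb
    have hbhA : b - h ∈ A := hmemA b hb
    have hTb : T b ∈ A := hTBA hb
    have hTbh : T (b - h) ∈ B := hTAB hbhA
    have hdist : dist (T b) (T (b - h)) = d := by
      have h1 : dist (T (b - h)) (T b) ≤ k * dist (b - h) b + (1 - k) * d :=
        hc (b - h) hbhA b hb
      have h2 : dist (b - h) b = d := by
        rw [dist_eq_norm]; simpa using hnorm
      have h3 : d ≤ dist (T b) (T (b - h)) := setDist_le' hTb hTbh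
      rw [h2] at h1
      rw [dist_comm] at h1
      nlinarith
    obtain ⟨p, -, hpuniq⟩ := hsharp (T b) hTb (T (b - h)) hTbh
    have e1 : (T b, T (b - h)) = p := by
      apply hpuniq
      exact ⟨hTb, hTbh, hdist, hdist⟩
    have e2 : (T (b - h) - h, T b + h) = p := by
      apply hpuniq
      refine ⟨hmemA _ hTbh, hmemB _ hTb, ?_, ?_⟩
      · rw [dist_eq_norm]; simpa using hnorm
      · rw [dist_eq_norm]; simpa using hnorm
    have := e1.trans e2.symm
    have h2nd := (Prod.mk.injEq _ _ _ _ ▸ this).2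
    -- T (b - h) = T b + h
    exact h2nd
end

section
/- Let A and B be nonempty closed and convex subsets of a reflexive and strictly convex Banach space X with property (H), and let T : A∪B → A∪B be a cyclic contraction. Then for every b ∈ B, the sequence of iterates {T^{2n}(b)} converges in norm to b₀, the unique best proximity point of T in B (i.e., the unique b₀ ∈ B with ‖b₀ − Tb₀‖ = dist(A,B)). -/
open Filter Metric

/-- The sequence `x` converges weakly to `z`. -/
def WeakTendsto {X : Type*} [NormedAddCommGroup X] [NormedSpace ℝ X]
    (x : ℕ → X) (z : X) : Prop :=
  ∀ f : X →L[ℝ] ℝ, Tendsto (fun n => f (x n)) atTop (nhds (f z))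

/-- `X` is reflexive: the canonical embedding into the double dual is surjective. -/
def ReflexiveSpace (X : Type*) [NormedAddCommGroup X] [NormedSpace ℝ X] : Prop :=
  Function.Surjective (NormedSpace.inclusionInDoubleDual ℝ X)

/-- Property (H): for sequences on the unit sphere, weak and norm convergence coincide. -/
def PropertyH (X : Type*) [NormedAddCommGroup X] [NormedSpace ℝ X] : Prop :=
  ∀ (x : ℕ → X) (z : X), (∀ n, ‖x n‖ = 1) →
    (WeakTendsto x z ↔ Tendsto x atTop (nhds z))

/-!
For `b ∈ B`, the even iterates `T^[2n] b ∈ B` and odd iterates `T^[2m+1] b ∈ A` satisfy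
`‖T^[2n] b - T^[2m+1] b‖ → dist(A, B)` as `n, m → ∞`: `T^[j]` shrinks the excess of a mixed
distance over `dist(A, B)` by `k ^ j`, and the orbit is bounded. These differences lie in the convex
set `B - A`, on which the norm is at least `dist(A, B)`. In a reflexive strictly convex space with
property (H) such a minimising sequence converges in norm to the unique point of least norm of
`closure (B - A)`: bounded sets are relatively weakly compact, a weak cluster point lies in the weak
closure of `(B - A) ∩ closedBall 0 r` for every `r > dist(A, B)`, which is the norm closure by
Mazur's theorem, and (H) turns weak convergence plus convergence of norms into norm convergence.
Hence `(T^[2n] b)` is Cauchy and its limit `p` is a best proximity point. Strict convexity forces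
`T (T p) = p`, and the same argument applied to `T^[2n] b - T p` shows that every even orbit
converges to `p`, which also makes `p` unique.
-/

open Set Topology Pointwise

theorem le_max_of_le_mul_add {u : ℕ → ℝ} {k c : ℝ} (hk0 : 0 ≤ k) (hk1 : k < 1)
    (h : ∀ n, u (n + 1) ≤ k * u n + c) (n : ℕ) : u n ≤ max (u 0) (c / (1 - k)) := by
  induction n with
  | zero => exact le_max_left _ _
  | succ n ih =>
    have hc : c ≤ (1 - k) * max (u 0) (c / (1 - k)) := by
      rw [← div_le_iff₀' (by linarith)]
      exact le_max_right _ _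
    nlinarith [h n, mul_le_mul_of_nonneg_left ih hk0]

section Metric

variable {X : Type*} [PseudoMetricSpace X]

theorem setDist_nonneg (A B : Set X) : 0 ≤ setDist A B :=
  Real.sInf_nonneg <| by rintro _ ⟨a, -, b, -, rfl⟩; exact dist_nonneg

theorem setDist_le_dist {A B : Set X} {a b : X} (ha : a ∈ A) (hb : b ∈ B) :
    setDist A B ≤ dist a b :=
  csInf_le ⟨0, by rintro _ ⟨a, -, b, -, rfl⟩; exact dist_nonneg⟩ (mem_image2_of_mem ha hb)

structure IsCyclicContractionWith (A B : Set X) (T : X → X) (k : ℝ) : Prop where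
  mapsTo_left : MapsTo T A B
  mapsTo_right : MapsTo T B A
  nonneg : 0 ≤ k
  lt_one : k < 1
  dist_le : ∀ x ∈ A, ∀ y ∈ B, dist (T x) (T y) ≤ k * dist x y + (1 - k) * setDist A B

theorem CyclicContraction.exists_isCyclicContractionWith {A B : Set X} {T : X → X}
    (hT : CyclicContraction A B T) : ∃ k, IsCyclicContractionWith A B T k :=
  let ⟨hA, hB, k, hk0, hk1, hk⟩ := hT
  ⟨k, hA, hB, hk0.le, hk1, hk⟩

namespace IsCyclicContractionWith

variable {A B : Set X} {T : X → X} {k : ℝ}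

theorem mapsTo_iterate_two_mul (hT : IsCyclicContractionWith A B T k) (n : ℕ) :
    MapsTo T^[2 * n] B B := by
  rw [Function.iterate_mul]
  exact (hT.mapsTo_left.comp hT.mapsTo_right).iterate n

theorem mapsTo_iterate_two_mul_add_one (hT : IsCyclicContractionWith A B T k) (n : ℕ) :
    MapsTo T^[2 * n + 1] B A := by
  rw [Function.iterate_succ']
  exact hT.mapsTo_right.comp (hT.mapsTo_iterate_two_mul n)

theorem dist_iterate_le (hT : IsCyclicContractionWith A B T k) {x y : X} (hx : x ∈ A)
    (hy : y ∈ B) (n : ℕ) :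
    dist (T^[n] x) (T^[n] y) ≤ k ^ n * dist x y + (1 - k ^ n) * setDist A B := by
  induction n generalizing x y with
  | zero => simp
  | succ n ih =>
    have := ih (hT.mapsTo_right hy) (hT.mapsTo_left hx)
    rw [dist_comm, dist_comm (T y)] at this
    rw [Function.iterate_succ_apply, Function.iterate_succ_apply, pow_succ]
    linarith [mul_le_mul_of_nonneg_left (hT.dist_le x hx y hy) (pow_nonneg hT.nonneg n)]

theorem exists_forall_dist_iterate_le (hT : IsCyclicContractionWith A B T k) {b : X}
    (hb : b ∈ B) : ∃ M, ∀ n, dist (T^[2 * n + 1] b) b ≤ M := by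
  have hrec : ∀ n, dist (T^[2 * (n + 1) + 1] b) b ≤
      k ^ 2 * dist (T^[2 * n + 1] b) b + ((1 - k ^ 2) * setDist A B + dist (T^[2] b) b) := by
    intro n
    rw [show 2 * (n + 1) + 1 = 2 + (2 * n + 1) by ring, Function.iterate_add_apply]
    linarith [dist_triangle (T^[2] (T^[2 * n + 1] b)) (T^[2] b) b,
      hT.dist_iterate_le (hT.mapsTo_iterate_two_mul_add_one n hb) hb 2]
  exact ⟨_, le_max_of_le_mul_add (pow_nonneg hT.nonneg 2)
    (pow_lt_one₀ hT.nonneg hT.lt_one two_ne_zero) hrec⟩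

theorem dist_iterate_two_mul_le (hT : IsCyclicContractionWith A B T k) {b : X} (hb : b ∈ B)
    {M : ℝ} (hM : ∀ n, dist (T^[2 * n + 1] b) b ≤ M) (m n : ℕ) :
    dist (T^[2 * m] b) (T^[2 * n + 1] b) ≤ setDist A B + (k ^ (2 * m) + k ^ (2 * n + 1)) * M := by
  have hM0 : 0 ≤ M := dist_nonneg.trans (hM 0)
  have hkm := mul_nonneg (pow_nonneg hT.nonneg (2 * m)) hM0
  have hkn := mul_nonneg (pow_nonneg hT.nonneg (2 * n + 1)) hM0
  have key : ∀ p j, dist (T^[p] (T^[2 * j + 1] b)) (T^[p] b) ≤ setDist A B + k ^ p * M :=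
    fun p j => by
      linarith [hT.dist_iterate_le (hT.mapsTo_iterate_two_mul_add_one j hb) hb p,
        mul_le_mul_of_nonneg_left (hM j) (pow_nonneg hT.nonneg p),
        mul_nonneg (pow_nonneg hT.nonneg p) (setDist_nonneg A B)]
  rcases le_or_gt m n with hmn | hnm
  · have h : T^[2 * n + 1] b = T^[2 * m] (T^[2 * (n - m) + 1] b) := by
      rw [← Function.iterate_add_apply]; congr 1; omega
    rw [h, dist_comm]
    linarith [key (2 * m) (n - m)]
  · have h : T^[2 * m] b = T^[2 * n + 1] (T^[2 * (m - n - 1) + 1] b) := by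
      rw [← Function.iterate_add_apply]; congr 1; omega
    rw [h]
    linarith [key (2 * n + 1) (m - n - 1)]

theorem tendsto_dist_iterate_two_mul (hT : IsCyclicContractionWith A B T k) {b : X}
    (hb : b ∈ B) : Tendsto (fun p : ℕ × ℕ => dist (T^[2 * p.1] b) (T^[2 * p.2 + 1] b))
      (atTop ×ˢ atTop) (𝓝 (setDist A B)) := by
  obtain ⟨M, hM⟩ := hT.exists_forall_dist_iterate_le hb
  have hpow := tendsto_pow_atTop_nhds_zero_of_lt_one hT.nonneg hT.lt_one
  have htwo : Tendsto (fun m : ℕ => 2 * m) atTop atTop := tendsto_id.const_mul_atTop' two_pos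
  have hbound : Tendsto (fun p : ℕ × ℕ => setDist A B + (k ^ (2 * p.1) + k ^ (2 * p.2 + 1)) * M)
      (atTop ×ˢ atTop) (𝓝 (setDist A B)) := by
    simpa using tendsto_const_nhds.add (((hpow.comp (htwo.comp tendsto_fst)).add
      (hpow.comp ((tendsto_add_atTop_nat 1).comp (htwo.comp tendsto_snd)))).mul_const M)
  exact tendsto_of_tendsto_of_tendsto_of_le_of_le tendsto_const_nhds hbound
    (fun p => setDist_le_dist (hT.mapsTo_iterate_two_mul_add_one p.2 hb)
      (hT.mapsTo_iterate_two_mul p.1 hb) |>.trans_eq (dist_comm _ _))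
    (fun p => hT.dist_iterate_two_mul_le hb hM p.1 p.2)

theorem dist_eq_setDist_of_tendsto (hT : IsCyclicContractionWith A B T k) {u : ℕ → X}
    {a b : X} (hu : ∀ n, u n ∈ A) (hb : b ∈ B) (hua : Tendsto u atTop (𝓝 a))
    (hTu : Tendsto (T ∘ u) atTop (𝓝 b)) (hab : dist a b = setDist A B) :
    dist b (T b) = setDist A B := by
  refine le_antisymm ?_ ((setDist_le_dist (hT.mapsTo_right hb) hb).trans_eq (dist_comm _ _))
  have := le_of_tendsto_of_tendsto' (hTu.dist tendsto_const_nhds)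
    (((hua.dist tendsto_const_nhds).const_mul k).add_const ((1 - k) * setDist A B))
    fun n => hT.dist_le (u n) (hu n) b hb
  rw [hab] at this
  linarith

end IsCyclicContractionWith

end Metric

theorem le_norm_of_mem_closure {X : Type*} [SeminormedAddCommGroup X] {S : Set X} {d : ℝ}
    (hd : ∀ s ∈ S, d ≤ ‖s‖) {s : X} (hs : s ∈ closure S) : d ≤ ‖s‖ :=
  closure_minimal hd (isClosed_le continuous_const continuous_norm) hs

theorem setDist_le_norm_of_mem_sub {X : Type*} [SeminormedAddCommGroup X] {A B : Set X} {s : X}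
    (hs : s ∈ B - A) : setDist A B ≤ ‖s‖ := by
  obtain ⟨b, hb, a, ha, rfl⟩ := hs
  rw [← dist_eq_norm, dist_comm]
  exact setDist_le_dist ha hb

section Banach

variable {X : Type*} [NormedAddCommGroup X] [NormedSpace ℝ X]

theorem Convex.eq_of_norm_eq_of_forall_le_norm [StrictConvexSpace ℝ X] {S : Set X}
    (hS : Convex ℝ S) {d : ℝ} (hd : ∀ s ∈ S, d ≤ ‖s‖) {u w : X} (hu : u ∈ S) (hw : w ∈ S)
    (hud : ‖u‖ = d) (hwd : ‖w‖ = d) : u = w := by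
  have hmid : d ≤ ‖(1 / 2 : ℝ) • u + (1 / 2 : ℝ) • w‖ :=
    hd _ (hS hu hw (by norm_num) (by norm_num) (by norm_num))
  rw [← smul_add, norm_smul, Real.norm_of_nonneg (by norm_num)] at hmid
  exact eq_of_norm_eq_of_norm_add_eq (hud.trans hwd.symm)
    (le_antisymm (norm_add_le u w) (by linarith))

theorem PropertyH.tendsto_of_weakTendsto (hH : PropertyH X) {v : ℕ → X} {e : X}
    (hw : WeakTendsto v e) (hn : Tendsto (‖v ·‖) atTop (𝓝 ‖e‖)) : Tendsto v atTop (𝓝 e) := by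
  classical
  rcases eq_or_ne e 0 with rfl | he
  · exact tendsto_zero_iff_norm_tendsto_zero.2 (by simpa using hn)
  have he' : ‖e‖ ≠ 0 := norm_ne_zero_iff.2 he
  -- (H) only speaks about sequences on the unit sphere; eventually `v n ≠ 0`.
  let u n := if v n = 0 then ‖e‖⁻¹ • e else ‖v n‖⁻¹ • v n
  have hu1 : ∀ n, ‖u n‖ = 1 := fun n => by
    by_cases h : v n = 0 <;> simp [u, h, norm_smul, he]
  have hvu : ∀ n, ‖v n‖ • u n = v n := fun n => by
    by_cases h : v n = 0 <;> simp [u, h]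
  have hu : Tendsto u atTop (𝓝 (‖e‖⁻¹ • e)) := by
    refine (hH u _ hu1).1 fun f => ?_
    have hev : ∀ᶠ n in atTop, ‖v n‖⁻¹ * f (v n) = f (u n) :=
      (hn.eventually_ne he').mono fun n hn => by simp_all [u]
    simpa using ((hn.inv₀ he').mul (hw f)).congr' hev
  simpa [hvu, he] using hn.smul hu

theorem ReflexiveSpace.isCompact_closure_image_toWeakSpace (hrefl : ReflexiveSpace X)
    {C : Set X} (hC : Bornology.IsBounded C) : IsCompact (closure (toWeakSpace ℝ X '' C)) := by
  refine NormedSpace.isCompact_closure_of_isBounded ℝ X _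
    (by rwa [(toWeakSpace ℝ X).injective.preimage_image]) fun χ _ => ?_
  obtain ⟨x, hx⟩ := hrefl (WeakDual.toStrongDual χ)
  exact ⟨toWeakSpace ℝ X x, congrArg StrongDual.toWeakDual hx⟩

theorem mem_closure_of_mapClusterPt_toWeakSpace {C : Set X} (hC : Convex ℝ C) {v : ℕ → X}
    (hv : ∀ᶠ n in atTop, v n ∈ C) {w : WeakSpace ℝ X}
    (hw : MapClusterPt w atTop (toWeakSpace ℝ X ∘ v)) : (toWeakSpace ℝ X).symm w ∈ closure C := by
  have : w ∈ closure (toWeakSpace ℝ X '' C) := isClosed_closure.mem_of_mapClusterPt hw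
    (hv.mono fun n hn => subset_closure (mem_image_of_mem _ hn))
  obtain ⟨x, hx, rfl⟩ := (hC.toWeakSpace_closure ℝ).symm ▸ this
  simpa using hx

theorem ReflexiveSpace.exists_tendsto_of_tendsto_norm [StrictConvexSpace ℝ X]
    (hrefl : ReflexiveSpace X) (hH : PropertyH X) {S : Set X} (hS : Convex ℝ S) {d : ℝ}
    (hd : ∀ s ∈ S, d ≤ ‖s‖) {v : ℕ → X} (hv : ∀ n, v n ∈ S)
    (hvd : Tendsto (‖v ·‖) atTop (𝓝 d)) :
    ∃ e ∈ closure S, ‖e‖ = d ∧ Tendsto v atTop (𝓝 e) := by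
  set ι := toWeakSpace ℝ X
  have hd' : ∀ s ∈ closure S, d ≤ ‖s‖ := fun _ => le_norm_of_mem_closure hd
  have hball : ∀ r > d, ∀ᶠ n in atTop, v n ∈ S ∩ closedBall 0 r := fun r hr =>
    (hvd.eventually (gt_mem_nhds hr)).mono fun n hn => ⟨hv n, mem_closedBall_zero_iff.2 hn.le⟩
  have hcluster : ∀ w, MapClusterPt w atTop (ι ∘ v) → ι.symm w ∈ closure S ∧ ‖ι.symm w‖ = d := by
    intro w hw
    have hmem : ∀ r > d, ι.symm w ∈ closure (S ∩ closedBall 0 r) := fun r hr =>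
      mem_closure_of_mapClusterPt_toWeakSpace (hS.inter (convex_closedBall 0 r)) (hball r hr) hw
    have hball' : ∀ r > d, ι.symm w ∈ closure S ∩ closedBall 0 r := fun r hr =>
      (closure_inter_subset_inter_closure _ _).trans
        (inter_subset_inter_right _ isClosed_closedBall.closure_subset) (hmem r hr)
    have hwS := (hball' (d + 1) (by linarith)).1
    refine ⟨hwS, le_antisymm ?_ (hd' _ hwS)⟩
    exact le_of_forall_gt_imp_ge_of_dense fun r hr => mem_closedBall_zero_iff.1 (hball' r hr).2
  have hK := hrefl.isCompact_closure_image_toWeakSpace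
    (isBounded_closedBall (x := (0 : X)) (r := d + 1))
  have hvK : ∀ᶠ n in atTop, (ι ∘ v) n ∈ closure (ι '' closedBall 0 (d + 1)) :=
    (hball (d + 1) (by linarith)).mono fun n hn => subset_closure (mem_image_of_mem ι hn.2)
  obtain ⟨w, -, hw⟩ := hK.exists_mapClusterPt_of_frequently hvK.frequently
  have hvw : Tendsto (ι ∘ v) atTop (𝓝 w) := hK.tendsto_nhds_of_unique_mapClusterPt hvK
    fun w' _ hw' => ι.symm.injective <| (hS.closure).eq_of_norm_eq_of_forall_le_norm hd'
      (hcluster w' hw').1 (hcluster w hw).1 (hcluster w' hw').2 (hcluster w hw).2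
  obtain ⟨hwS, hwd⟩ := hcluster w hw
  refine ⟨ι.symm w, hwS, hwd, hH.tendsto_of_weakTendsto (fun f => ?_) (hwd ▸ hvd)⟩
  exact ((WeakBilin.eval_continuous (topDualPairing ℝ X).flip f).tendsto w).comp hvw

theorem ReflexiveSpace.tendsto_of_tendsto_norm [StrictConvexSpace ℝ X]
    (hrefl : ReflexiveSpace X) (hH : PropertyH X) {S : Set X} (hS : Convex ℝ S) {d : ℝ}
    (hd : ∀ s ∈ S, d ≤ ‖s‖) {e : X} (he : e ∈ closure S) (hed : ‖e‖ = d)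
    {ι : Type*} {l : Filter ι} [l.IsCountablyGenerated] {v : ι → X} (hv : ∀ i, v i ∈ S)
    (hvd : Tendsto (‖v ·‖) l (𝓝 d)) : Tendsto v l (𝓝 e) := by
  refine tendsto_iff_seq_tendsto.2 fun u hu => ?_
  obtain ⟨e', he', he'd, hvu⟩ :=
    hrefl.exists_tendsto_of_tendsto_norm hH hS hd (fun n => hv (u n)) (hvd.comp hu)
  rwa [hS.closure.eq_of_norm_eq_of_forall_le_norm (fun _ => le_norm_of_mem_closure hd) he' he
    he'd hed] at hvu

end Banach

theorem cauchySeq_of_tendsto_sub {E : Type*} [SeminormedAddCommGroup E] {x y : ℕ → E} {e : E}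
    (h : Tendsto (fun p : ℕ × ℕ => x p.1 - y p.2) (atTop ×ˢ atTop) (𝓝 e)) : CauchySeq x := by
  have hdiag : Tendsto (fun p : ℕ × ℕ => x p.2 - y p.2) (atTop ×ˢ atTop) (𝓝 e) :=
    h.comp (tendsto_snd.prodMk tendsto_snd)
  rw [cauchySeq_iff_tendsto_dist_atTop_0, ← prod_atTop_atTop_eq]
  simpa [dist_eq_norm] using (h.sub hdiag).norm

section CyclicBanach

variable {X : Type*} [NormedAddCommGroup X] [NormedSpace ℝ X] {A B : Set X} {T : X → X} {k : ℝ}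

namespace IsCyclicContractionWith

theorem exists_dist_eq_setDist [CompleteSpace X] [StrictConvexSpace ℝ X]
    (hT : IsCyclicContractionWith A B T k) (hrefl : ReflexiveSpace X) (hH : PropertyH X)
    (hAconv : Convex ℝ A) (hBconv : Convex ℝ B) (hBclosed : IsClosed B) {b : X} (hb : b ∈ B) :
    ∃ p ∈ B, dist p (T p) = setDist A B := by
  set x := fun n => T^[2 * n] b
  set y := fun n => T^[2 * n + 1] b
  have hS : ∀ m n, x m - y n ∈ B - A := fun m n =>
    sub_mem_sub (hT.mapsTo_iterate_two_mul m hb) (hT.mapsTo_iterate_two_mul_add_one n hb)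
  have hnorm : Tendsto (fun p : ℕ × ℕ => ‖x p.1 - y p.2‖) (atTop ×ˢ atTop) (𝓝 (setDist A B)) := by
    simpa only [dist_eq_norm] using hT.tendsto_dist_iterate_two_mul hb
  have hdiag : Tendsto (fun n : ℕ => (n, n)) atTop (atTop ×ˢ atTop) := tendsto_id.prodMk tendsto_id
  obtain ⟨e, he, hed, -⟩ := hrefl.exists_tendsto_of_tendsto_norm hH (hBconv.sub hAconv)
    (fun _ => setDist_le_norm_of_mem_sub) (fun n => hS n n) (hnorm.comp hdiag)
  have hxy := hrefl.tendsto_of_tendsto_norm hH (hBconv.sub hAconv)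
    (fun _ => setDist_le_norm_of_mem_sub) he hed (fun p : ℕ × ℕ => hS p.1 p.2) hnorm
  obtain ⟨l, hl⟩ := cauchySeq_tendsto_of_complete (cauchySeq_of_tendsto_sub hxy)
  have hy : Tendsto y atTop (𝓝 (l - e)) := by
    simpa using hl.sub (hxy.comp hdiag)
  have hlB : l ∈ B := hBclosed.mem_of_tendsto hl
    (Eventually.of_forall fun n => hT.mapsTo_iterate_two_mul n hb)
  refine ⟨l, hlB, hT.dist_eq_setDist_of_tendsto
    (fun n => hT.mapsTo_iterate_two_mul_add_one n hb) hlB hy ?_ (by simpa [dist_eq_norm] using hed)⟩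
  exact (hl.comp (tendsto_add_atTop_nat 1)).congr fun n =>
    Function.iterate_succ_apply' T (2 * n + 1) b

theorem iterate_two_mul_eq_self [StrictConvexSpace ℝ X] (hT : IsCyclicContractionWith A B T k)
    (hAconv : Convex ℝ A) (hBconv : Convex ℝ B) {p : X} (hp : p ∈ B)
    (hpd : dist p (T p) = setDist A B) (n : ℕ) : T^[2 * n] p = p := by
  have hTp := hT.mapsTo_right hp
  have hTTp : dist (T (T p)) (T p) = setDist A B := by
    have := hT.dist_le _ hTp p hp
    rw [dist_comm (T p), hpd] at this
    exact le_antisymm (by linarith)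
      ((setDist_le_dist hTp (hT.mapsTo_left hTp)).trans_eq (dist_comm _ _))
  have h : T (T p) - T p = p - T p :=
    (hBconv.sub hAconv).eq_of_norm_eq_of_forall_le_norm (fun _ => setDist_le_norm_of_mem_sub)
      (sub_mem_sub (hT.mapsTo_left hTp) hTp) (sub_mem_sub hp hTp)
      (by rwa [← dist_eq_norm]) (by rwa [← dist_eq_norm])
  rw [Function.iterate_mul]
  exact Function.iterate_fixed (sub_left_inj.1 h) n

theorem tendsto_iterate_two_mul [StrictConvexSpace ℝ X] (hT : IsCyclicContractionWith A B T k)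
    (hrefl : ReflexiveSpace X) (hH : PropertyH X) (hAconv : Convex ℝ A) (hBconv : Convex ℝ B)
    {p : X} (hp : p ∈ B) (hpd : dist p (T p) = setDist A B) {b : X} (hb : b ∈ B) :
    Tendsto (fun n => T^[2 * n] b) atTop (𝓝 p) := by
  have hTp := hT.mapsTo_right hp
  have hfix : ∀ n, T^[2 * n] (T p) = T p := fun n => by
    rw [← Function.iterate_succ_apply, Function.iterate_succ_apply',
      hT.iterate_two_mul_eq_self hAconv hBconv hp hpd]
  have hpow : Tendsto (fun n : ℕ => k ^ (2 * n)) atTop (𝓝 0) :=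
    (tendsto_pow_atTop_nhds_zero_of_lt_one hT.nonneg hT.lt_one).comp
      (tendsto_id.const_mul_atTop' two_pos)
  have hbound : Tendsto (fun n : ℕ => k ^ (2 * n) * dist (T p) b + (1 - k ^ (2 * n)) * setDist A B)
      atTop (𝓝 (setDist A B)) := by
    simpa using (hpow.mul_const (dist (T p) b)).add
      (((tendsto_const_nhds (x := (1 : ℝ))).sub hpow).mul_const (setDist A B))
  have hnorm : Tendsto (fun n => ‖T^[2 * n] b - T p‖) atTop (𝓝 (setDist A B)) := by
    refine tendsto_of_tendsto_of_tendsto_of_le_of_le tendsto_const_nhds hbound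
      (fun n => setDist_le_norm_of_mem_sub (sub_mem_sub (hT.mapsTo_iterate_two_mul n hb) hTp))
      fun n => ?_
    have := hT.dist_iterate_le hTp hb (2 * n)
    rwa [hfix n, dist_comm, dist_eq_norm] at this
  have := hrefl.tendsto_of_tendsto_norm hH (hBconv.sub hAconv)
    (fun _ => setDist_le_norm_of_mem_sub) (subset_closure (sub_mem_sub hp hTp))
    (by rw [← dist_eq_norm, hpd]) (fun n => sub_mem_sub (hT.mapsTo_iterate_two_mul n hb) hTp) hnorm
  simpa using this.add_const (T p)

end IsCyclicContractionWith

end CyclicBanach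

theorem iterates_converge_to_best_proximity_general {X : Type*} [NormedAddCommGroup X]
    [NormedSpace ℝ X] [CompleteSpace X] [StrictConvexSpace ℝ X]
    (hrefl : ReflexiveSpace X) (hH : PropertyH X)
    (A B : Set X) (hB : B.Nonempty)
    (hBclosed : IsClosed B)
    (hAconv : Convex ℝ A) (hBconv : Convex ℝ B)
    (T : X → X) (hT : CyclicContraction A B T) :
    ∃ b₀ ∈ B, dist b₀ (T b₀) = setDist A B ∧
      (∀ b ∈ B, dist b (T b) = setDist A B → b = b₀) ∧
      ∀ b ∈ B, Tendsto (fun n => T^[2 * n] b) atTop (nhds b₀) := by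
  obtain ⟨k, hk⟩ := hT.exists_isCyclicContractionWith
  obtain ⟨p, hp, hpd⟩ := hk.exists_dist_eq_setDist hrefl hH hAconv hBconv hBclosed hB.some_mem
  refine ⟨p, hp, hpd, fun q hq hqd => ?_,
    fun b hb => hk.tendsto_iterate_two_mul hrefl hH hAconv hBconv hp hpd hb⟩
  have hpq := hk.tendsto_iterate_two_mul hrefl hH hAconv hBconv hq hqd hp
  simp only [hk.iterate_two_mul_eq_self hAconv hBconv hp hpd] at hpq
  exact (tendsto_const_nhds_iff.1 hpq).symm

theorem iterates_converge_to_best_proximity {X : Type*} [NormedAddCommGroup X]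
    [NormedSpace ℝ X] [CompleteSpace X] [StrictConvexSpace ℝ X]
    (hrefl : ReflexiveSpace X) (hH : PropertyH X)
    (A B : Set X) (hA : A.Nonempty) (hB : B.Nonempty)
    (hAclosed : IsClosed A) (hBclosed : IsClosed B)
    (hAconv : Convex ℝ A) (hBconv : Convex ℝ B)
    (T : X → X) (hT : CyclicContraction A B T) :
    ∃ b₀ ∈ B, dist b₀ (T b₀) = setDist A B ∧
      (∀ b ∈ B, dist b (T b) = setDist A B → b = b₀) ∧
      ∀ b ∈ B, Tendsto (fun n => T^[2 * n] b) atTop (nhds b₀) :=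
  iterates_converge_to_best_proximity_general hrefl hH A B hB hBclosed hAconv hBconv T hT
end
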